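/- Let M be a loopless matroid of odd rank r = 2k+1 on a finite ground set. Then the coefficient of t^k in the Kazhdan–Lusztig polynomial P_M(t) equals the coefficient of t^k in the inverse Kazhdan–Lusztig polynomial Q_M(t). -/

import Mathlib

/-! Self-contained definitions: matroid minors, rank, flats, the Möbius function of the
lattice of flats, the characteristic polynomial, the defining axioms of the
(inverse) Kazhdan–Lusztig polynomials of a matroid, and basic structural notions
(circuits, connectivity, simplicity, representability, modularity). -/

open Polynomial Matroid

namespace KL

variable {α : Type} [Fintype α]

/-- The deletion of a set `D` from the matroid `M`. -/
def del (M : Matroid α) (D : Set α) : Matroid α := M ↾ (M.E \ D)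

/-- The contraction of the matroid `M` by the set `C`, defined by duality. -/
def con (M : Matroid α) (C : Set α) : Matroid α := (del M✶ C)✶

/-- The rank of a matroid on a finite ground set: the maximal size of an independent set. -/
noncomputable def rk (M : Matroid α) : ℕ := sSup {n | ∃ I, M.Indep I ∧ I.ncard = n}

/-- The rank of a set `X` in a matroid `M`. -/
noncomputable def rkSet (M : Matroid α) (X : Set α) : ℕ := rk (M ↾ X)

/-- A matroid is loopless if every singleton of its ground set is independent. -/
def Loopless (M : Matroid α) : Prop := ∀ e ∈ M.E, M.Indep {e}

/-- A circuit of a matroid is a minimal dependent set. -/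
def Circuit (M : Matroid α) (C : Set α) : Prop :=
  M.Dep C ∧ ∀ D, M.Dep D → D ⊆ C → D = C

/-- A matroid is connected if its ground set is nonempty and every two distinct
elements of the ground set lie in a common circuit. -/
def Connected (M : Matroid α) : Prop :=
  M.E.Nonempty ∧ ∀ e f, e ∈ M.E → f ∈ M.E → e ≠ f → ∃ C, Circuit M C ∧ e ∈ C ∧ f ∈ C

/-- A matroid is simple if it has no loops and no pair of parallel elements; equivalently,
every subset of the ground set with at most two elements is independent. -/
def Simple (M : Matroid α) : Prop :=
  ∀ I : Set α, I ⊆ M.E → I.ncard ≤ 2 → M.Indep I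

/-- A matroid is representable over a field `𝔽` if there is an assignment of vectors to the
elements of the ground set such that independence coincides with linear independence. -/
def Representable (M : Matroid α) (𝔽 : Type) [Field 𝔽] : Prop :=
  ∃ (n : ℕ) (φ : α → (Fin n → 𝔽)), ∀ I : Set α,
    M.Indep I ↔ (I ⊆ M.E ∧ LinearIndependent 𝔽 (fun x : I => φ x))

/-- A matroid is regular if it is representable over every field. -/
def Regular (M : Matroid α) : Prop := ∀ (𝔽 : Type) (_ : Field 𝔽), Representable M 𝔽

/-- The lattice of flats of `M` is modular: `rk F + rk G = rk (F ∨ G) + rk (F ∧ G)` for all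
flats `F, G`, where the join of two flats is the closure of their union and their meet is
their intersection. -/
def ModularFlats (M : Matroid α) : Prop :=
  ∀ F G : Set α, M.IsFlat F → M.IsFlat G →
    rkSet M F + rkSet M G = rkSet M (M.closure (F ∪ G)) + rkSet M (F ∩ G)

open Classical in
/-- The finset of flats of a matroid on a finite ground set. -/
noncomputable def flats (M : Matroid α) : Finset (Set α) :=
  Finset.univ.filter fun F => M.IsFlat F

open Classical in
/-- The Möbius function of the lattice of flats of `M`, as a function on pairs of sets
(zero when either set is not a flat, and zero on non-ordered pairs of flats). -/
noncomputable def mob (M : Matroid α) (F G : Set α) : ℤ :=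
  letI : LocallyFiniteOrder {X : Set α // M.IsFlat X} := Fintype.toLocallyFiniteOrder
  if hF : M.IsFlat F then
    if hG : M.IsFlat G then
      IncidenceAlgebra.mu ℤ (⟨F, hF⟩ : {X : Set α // M.IsFlat X}) ⟨G, hG⟩
    else 0
  else 0

open Classical in
/-- The doubly-indexed Whitney numbers of the first kind:
`w_{i,j} = Σ μ(F,G)` over pairs of flats `F ⊆ G` with `rk F = i` and `rk G = j`. -/
noncomputable def whitney (M : Matroid α) (i j : ℕ) : ℤ :=
  ∑ F ∈ flats M, ∑ G ∈ flats M,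
    if rkSet M F = i ∧ rkSet M G = j ∧ F ⊆ G then mob M F G else 0

/-- The characteristic polynomial `χ_M(t) = Σ_{F ∈ L(M)} μ(∅,F) t^(r - rk F)`
of a (loopless) matroid. -/
noncomputable def chi (M : Matroid α) : Polynomial ℤ :=
  ∑ F ∈ flats M, C (mob M ∅ F) * X ^ (rk M - rkSet M F)

/-- The defining axioms of the Kazhdan–Lusztig polynomial assignment `M ↦ P_M(t)`:
`P_M = 1` in rank `0`; `deg P_M < r/2` for `r > 0`; and the defining recursion
`t^r P_M(t⁻¹) = Σ_{F ∈ L(M)} χ_{M_F}(t) P_{M^F}(t)`, where `t^r P_M(t⁻¹)` is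
formalized as `reflect r P_M`. -/
def IsKLPolynomial (P : Matroid α → Polynomial ℤ) : Prop :=
  (∀ N : Matroid α, Loopless N → rk N = 0 → P N = 1) ∧
  (∀ N : Matroid α, Loopless N → 0 < rk N → 2 * (P N).natDegree < rk N) ∧
  (∀ N : Matroid α, Loopless N →
    (P N).reflect (rk N) = ∑ F ∈ flats N, chi (N ↾ F) * P (con N F))

/-- The defining axioms of the inverse Kazhdan–Lusztig polynomial assignment `M ↦ Q_M(t)`:
`Q_M = 1` in rank `0`; `deg Q_M < r/2` for `r > 0`; and the defining recursion
`(-1)^r t^r Q_M(t⁻¹) = Σ_{F ∈ L(M)} (-1)^(rk F) Q_{M_F}(t) · t^(r - rk F) χ_{M^F}(t⁻¹)`,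
where `t^k p(t⁻¹)` is formalized as `reflect k p`. -/
def IsInvKLPolynomial (Q : Matroid α → Polynomial ℤ) : Prop :=
  (∀ N : Matroid α, Loopless N → rk N = 0 → Q N = 1) ∧
  (∀ N : Matroid α, Loopless N → 0 < rk N → 2 * (Q N).natDegree < rk N) ∧
  (∀ N : Matroid α, Loopless N →
    (-1 : Polynomial ℤ) ^ (rk N) * (Q N).reflect (rk N) =
      ∑ F ∈ flats N, (-1 : Polynomial ℤ) ^ (rkSet N F) * Q (N ↾ F) *
        (chi (con N F)).reflect (rk N - rkSet N F))

/-! ### Auxiliary development -/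

section Aux

set_option linter.unusedSectionVars false

variable {M N : Matroid α} {I J B C D X Y F G : Set α} {e : α}

instance matroidFinite (M : Matroid α) : M.Finite := ⟨Set.toFinite _⟩

lemma bddAbove_aux (M : Matroid α) : BddAbove {n | ∃ I, M.Indep I ∧ I.ncard = n} := by
  refine ⟨Fintype.card α, ?_⟩
  rintro n ⟨I, _, rfl⟩
  simpa [Set.ncard_univ] using Set.ncard_le_ncard (Set.subset_univ I) Set.finite_univ

lemma rk_eq_ncard_of_base (hB : M.IsBase B) : rk M = B.ncard := by
  refine le_antisymm (csSup_le ⟨0, ∅, M.empty_indep, by simp⟩ ?_)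
    (le_csSup (bddAbove_aux M) ⟨B, hB.indep, rfl⟩)
  rintro n ⟨I, hI, rfl⟩
  obtain ⟨B', hB', hIB'⟩ := hI.exists_isBase_superset
  exact (Set.ncard_le_ncard hIB' (Set.toFinite _)).trans (hB'.ncard_eq_ncard_of_isBase hB).le

lemma ncard_le_rk_of_indep (hI : M.Indep I) : I.ncard ≤ rk M :=
  le_csSup (bddAbove_aux M) ⟨I, hI, rfl⟩

lemma rkSet_eq_ncard_of_basis' (hI : M.IsBasis' I X) : rkSet M X = I.ncard :=
  rk_eq_ncard_of_base (isBase_restrict_iff'.2 hI)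

lemma rkSet_eq_ncard_of_basis (hI : M.IsBasis I X) : rkSet M X = I.ncard :=
  rkSet_eq_ncard_of_basis' hI.isBasis'

lemma rkSet_ground (M : Matroid α) : rkSet M M.E = rk M := by
  rw [rkSet, restrict_ground_eq_self]

lemma rkSet_restrict (M : Matroid α) (hXY : X ⊆ Y) : rkSet (M ↾ Y) X = rkSet M X := by
  rw [rkSet, rkSet, restrict_restrict_eq _ hXY]

lemma rkSet_mono (M : Matroid α) (hXY : X ⊆ Y) : rkSet M X ≤ rkSet M Y := by
  obtain ⟨I, hI⟩ := M.exists_isBasis' X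
  rw [rkSet_eq_ncard_of_basis' hI]
  exact ncard_le_rk_of_indep (restrict_indep_iff.2 ⟨hI.indep, hI.subset.trans hXY⟩)

lemma rkSet_le_rk (M : Matroid α) (hX : X ⊆ M.E) : rkSet M X ≤ rk M :=
  (rkSet_ground M) ▸ rkSet_mono M hX

lemma base_of_indep_of_rk_le (hI : M.Indep I) (h : rk M ≤ I.ncard) : M.IsBase I := by
  obtain ⟨B, hB, hIB⟩ := hI.exists_isBase_superset
  have hBI : I = B :=
    Set.eq_of_subset_of_ncard_le hIB ((rk_eq_ncard_of_base hB) ▸ h) (Set.toFinite _)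
  exact hBI ▸ hB

lemma rk_eq_zero_of_ground_empty (h : M.E = ∅) : rk M = 0 := by
  obtain ⟨B, hB⟩ := M.exists_isBase
  have : B = ∅ := Set.subset_eq_empty (hB.subset_ground.trans h.subset) rfl
  rw [rk_eq_ncard_of_base hB, this, Set.ncard_empty]

lemma ground_empty_of_rk_eq_zero (hM : Loopless M) (h : rk M = 0) : M.E = ∅ := by
  by_contra hne
  obtain ⟨e, he⟩ := Set.nonempty_iff_ne_empty.2 hne
  have := ncard_le_rk_of_indep (hM e he)
  simp [h] at this

lemma closure_flat' (M : Matroid α) (X : Set α) : M.IsFlat (M.closure X) := by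
  have h := M.subtypeClosure.isClosed_closure ⟨X ∩ M.E, Set.inter_subset_right⟩
  rw [isClosed_iff_isFlat] at h
  rwa [closure_eq_subtypeClosure]

lemma flat_of_closure_eq (hF : M.closure F = F) : M.IsFlat F := hF ▸ closure_flat' M F

lemma loopless_closure_empty (hM : Loopless M) : M.closure ∅ = ∅ := by
  by_contra hne
  obtain ⟨e, he⟩ := Set.nonempty_iff_ne_empty.2 hne
  have heE : e ∈ M.E := mem_ground_of_mem_closure he
  have h2 := (M.empty_indep.mem_closure_iff_of_notMem (Set.notMem_empty e)).1 he
  exact (show M.Dep {e} by simpa using h2).not_indep (hM e heE)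

lemma loopless_empty_flat (hM : Loopless M) : M.IsFlat ∅ :=
  flat_of_closure_eq (loopless_closure_empty hM)

lemma rkSet_empty (M : Matroid α) : rkSet M ∅ = 0 :=
  rk_eq_zero_of_ground_empty (by simp)

lemma loopless_restrict (hM : Loopless M) (hX : X ⊆ M.E) : Loopless (M ↾ X) := by
  intro e he
  rw [restrict_ground_eq] at he
  exact restrict_indep_iff.2 ⟨hM e (hX he), Set.singleton_subset_iff.2 he⟩

lemma rkSet_closure_eq (M : Matroid α) (X : Set α) : rkSet M (M.closure X) = rkSet M X := by
  obtain ⟨I, hI⟩ := M.exists_isBasis' X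
  rw [rkSet_eq_ncard_of_basis' hI, rkSet_eq_ncard_of_basis hI.isBasis_closure_right]

lemma flat_ground_of_rkSet_eq (hF : M.IsFlat F) (h : rk M ≤ rkSet M F) : F = M.E := by
  obtain ⟨I, hI⟩ := M.exists_isBasis F hF.subset_ground
  have hIb : M.IsBase I := base_of_indep_of_rk_le hI.indep (by rwa [← rkSet_eq_ncard_of_basis hI])
  have := hIb.closure_eq
  rw [hI.closure_eq_closure, hF.closure] at this
  exact this

lemma rkSet_lt_rk_of_flat_ne (hF : M.IsFlat F) (hne : F ≠ M.E) : rkSet M F < rk M := by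
  rcases lt_or_ge (rkSet M F) (rk M) with h | h
  · exact h
  · exact absurd (flat_ground_of_rkSet_eq hF h) hne

lemma loopless_flat_rk_pos (hM : Loopless M) (hF : M.IsFlat F) (hne : F ≠ ∅) :
    0 < rkSet M F := by
  obtain ⟨e, he⟩ := Set.nonempty_iff_ne_empty.2 hne
  have : ({e} : Set α).ncard ≤ rkSet M F := ncard_le_rk_of_indep
    (restrict_indep_iff.2 ⟨hM e (hF.subset_ground he), Set.singleton_subset_iff.2 he⟩)
  simp at this; omega

lemma con_ground (M : Matroid α) (C : Set α) : (con M C).E = M.E \ C := rfl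

lemma con_indep_iff (hC : C ⊆ M.E) (hJ : M.IsBasis J C) :
    (con M C).Indep I ↔ I ⊆ M.E \ C ∧ M.Indep (I ∪ J) := by
  have hdel : del M✶ C = M✶ ↾ (M.E \ C) := rfl
  rw [con, hdel, dual_indep_iff_exists']
  simp only [restrict_ground_eq]
  constructor
  · rintro ⟨hIE, D, hD, hID⟩
    rw [isBase_restrict_iff'] at hD
    have hD' : M✶.IsBasis D (M.E \ C) := hD.isBasis (Set.diff_subset (t := C))
    have hcoD : M.Coindep D := hD'.indep
    have hDE : D ⊆ M.E := hcoD.subset_ground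
    have hsp : M.Spanning (M.E \ D) := hcoD.compl_spanning
    have hJD : J ⊆ M.E \ D := fun x hx => ⟨hC (hJ.subset hx),
      fun hxD => ((hD'.subset hxD).2 (hJ.subset hx))⟩
    obtain ⟨B₁, hB₁, hJB₁⟩ := hJ.indep.subset_isBasis_of_subset hJD
    have hB₁base : M.IsBase B₁ := by
      rw [isBase_iff_indep_closure_eq]
      refine ⟨hB₁.indep, ?_⟩
      rw [hB₁.closure_eq_closure, hsp.closure_eq]
    have hDcompl : D = (M.E \ B₁) ∩ (M.E \ C) := by
      refine hD'.eq_of_subset_indep ((hB₁base.compl_isBase_dual.indep).inter_right _) ?_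
        Set.inter_subset_right
      exact Set.subset_inter (fun x hx => ⟨hDE hx, fun hxB => (hB₁.subset hxB).2 hx⟩) hD'.subset
    have hIB₁ : I ⊆ B₁ := by
      intro x hx
      by_contra hxB
      exact hID.ne_of_mem hx (hDcompl ▸ ⟨⟨(hIE hx).1, hxB⟩, hIE hx⟩) rfl
    exact ⟨hIE, hB₁base.indep.subset (Set.union_subset hIB₁ hJB₁)⟩
  · rintro ⟨hIE, hIJ⟩
    obtain ⟨B, hB, hIJB⟩ := hIJ.exists_isBase_superset
    have hJBC : J = B ∩ C := hJ.eq_of_subset_indep (hB.indep.inter_right C)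
      (Set.subset_inter ((Set.subset_union_right).trans hIJB) hJ.subset) Set.inter_subset_right
    have hbasis : M.IsBasis (B ∩ C) C := hJBC ▸ hJ
    rw [hB.inter_isBasis_iff_compl_inter_isBasis_dual hC] at hbasis
    refine ⟨hIE, (M.E \ B) ∩ (M.E \ C), ?_, ?_⟩
    · rw [isBase_restrict_iff']
      exact hbasis.isBasis'
    · exact Set.disjoint_left.2 fun x hx hx2 =>
        hx2.1.2 (hIJB (Set.mem_union_left _ hx))

lemma loopless_con (hM : Loopless M) (hF : M.IsFlat F) : Loopless (con M F) := by
  intro e he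
  rw [con_ground] at he
  obtain ⟨J, hJ⟩ := M.exists_isBasis F hF.subset_ground
  rw [con_indep_iff hF.subset_ground hJ]
  refine ⟨Set.singleton_subset_iff.2 he, ?_⟩
  rw [Set.singleton_union, hJ.indep.insert_indep_iff_of_notMem (fun h => he.2 (hJ.subset h))]
  refine ⟨he.1, fun h => he.2 ?_⟩
  rw [hJ.closure_eq_closure, hF.closure] at h
  exact h

lemma con_base_iff (hC : C ⊆ M.E) (hJ : M.IsBasis J C) :
    (con M C).IsBase B ↔ B ⊆ M.E \ C ∧ M.IsBase (B ∪ J) := by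
  constructor
  · intro hB
    have hBi := hB.indep
    rw [con_indep_iff hC hJ] at hBi
    obtain ⟨hBE, hBJ⟩ := hBi
    obtain ⟨B₂, hB₂, hBJB₂⟩ := hBJ.exists_isBase_superset
    have hJB₂ : J = B₂ ∩ C := hJ.eq_of_subset_indep (hB₂.indep.inter_right C)
      (Set.subset_inter ((Set.subset_union_right).trans hBJB₂) hJ.subset) Set.inter_subset_right
    have hB2diff : (con M C).Indep (B₂ \ C) := by
      rw [con_indep_iff hC hJ]
      refine ⟨Set.diff_subset_diff_left hB₂.subset_ground, hB₂.indep.subset ?_⟩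
      exact Set.union_subset Set.diff_subset (hJB₂ ▸ Set.inter_subset_left)
    have hBeq : B = B₂ \ C := hB.eq_of_subset_indep hB2diff
      (Set.subset_diff.2 ⟨(Set.subset_union_left).trans hBJB₂,
        (Set.subset_diff.1 hBE).2⟩)
    have : B ∪ J = B₂ := by
      rw [hBeq, hJB₂]
      ext x
      simp only [Set.mem_union, Set.mem_diff, Set.mem_inter_iff]
      constructor
      · rintro (⟨h, _⟩ | ⟨h, _⟩) <;> exact h
      · intro h
        by_cases hx : x ∈ C
        · exact Or.inr ⟨h, hx⟩
        · exact Or.inl ⟨h, hx⟩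
    exact ⟨hBE, this ▸ hB₂⟩
  · rintro ⟨hBE, hBJ⟩
    refine Indep.isBase_of_maximal ?_ ?_
    · rw [con_indep_iff hC hJ]
      exact ⟨hBE, hBJ.indep⟩
    · intro B' hB' hBB'
      rw [con_indep_iff hC hJ] at hB'
      have : B ∪ J = B' ∪ J := hBJ.eq_of_subset_indep hB'.2
        (Set.union_subset_union_left _ hBB')
      refine Set.Subset.antisymm hBB' fun x hx => ?_
      have : x ∈ B ∪ J := this ▸ Set.mem_union_left _ hx
      rcases this with h | h
      · exact h
      · exact absurd (hJ.subset h) (hB'.1 hx).2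

lemma rk_con_add (hC : C ⊆ M.E) : rk (con M C) + rkSet M C = rk M := by
  obtain ⟨J, hJ⟩ := M.exists_isBasis C hC
  obtain ⟨B, hB⟩ := (con M C).exists_isBase
  obtain ⟨hBE, hBJ⟩ := (con_base_iff hC hJ).1 hB
  rw [rk_eq_ncard_of_base hB, rkSet_eq_ncard_of_basis hJ, rk_eq_ncard_of_base hBJ,
    Set.ncard_union_eq (Set.disjoint_left.2 fun x hx hx2 => (hBE hx).2 (hJ.subset hx2))
      (Set.toFinite _) (Set.toFinite _)]

lemma con_con (M : Matroid α) (C D : Set α) (hC : C ⊆ M.E) (hD : D ⊆ M.E \ C) :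
    con (con M C) D = con M (C ∪ D) := by
  have h1 : (con M C)✶ = M✶ ↾ (M.E \ C) := dual_dual (del M✶ C)
  have h2 : del (con M C)✶ D = M✶ ↾ (M.E \ (C ∪ D)) := by
    rw [del, h1, restrict_ground_eq, restrict_restrict_eq _ Set.diff_subset, Set.diff_diff]
  show (del (con M C)✶ D)✶ = (del M✶ (C ∪ D))✶
  rw [h2]
  rfl

lemma con_empty (M : Matroid α) : con M ∅ = M := by
  have : del M✶ ∅ = M✶ := by
    rw [del, Set.diff_empty, restrict_ground_eq_self]
  show (del M✶ ∅)✶ = M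
  rw [this, dual_dual]

lemma restrict_con_comm (hC : C ⊆ M.E) (hX : X ⊆ M.E \ C) :
    (con M C) ↾ X = con (M ↾ (X ∪ C)) C := by
  have hXC : X ∪ C ⊆ M.E := Set.union_subset (hX.trans Set.diff_subset) hC
  obtain ⟨J, hJ⟩ := M.exists_isBasis C hC
  have hJ' : (M ↾ (X ∪ C)).IsBasis J C := hJ.isBasis_restrict_of_subset Set.subset_union_right
  refine ext_indep ?_ fun I hI => ?_
  · rw [restrict_ground_eq, con_ground, restrict_ground_eq, Set.union_diff_right]
    exact ((Set.subset_diff.1 hX).2.sdiff_eq_left).symm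
  · rw [restrict_ground_eq] at hI
    rw [restrict_indep_iff, con_indep_iff hC hJ,
      con_indep_iff (show C ⊆ (M ↾ (X ∪ C)).E from Set.subset_union_right) hJ',
      restrict_ground_eq, restrict_indep_iff]
    constructor
    · rintro ⟨⟨hIE, hIJ⟩, hIX⟩
      refine ⟨?_, hIJ, Set.union_subset (hIX.trans Set.subset_union_left)
          (hJ.subset.trans Set.subset_union_right)⟩
      rw [Set.union_diff_right]
      exact Set.subset_diff.2 ⟨hIX, (Set.subset_diff.1 hIE).2⟩
    · rintro ⟨hIE, hIJ, -⟩
      exact ⟨⟨hI.trans hX, hIJ⟩, hI⟩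

lemma rkSet_con (hC : C ⊆ M.E) (hX : X ⊆ M.E \ C) :
    rkSet (con M C) X + rkSet M C = rkSet M (X ∪ C) := by
  have hXC : X ∪ C ⊆ M.E := Set.union_subset (hX.trans Set.diff_subset) hC
  have h := rk_con_add (M := M ↾ (X ∪ C)) (C := C)
    (by rw [restrict_ground_eq]; exact Set.subset_union_right)
  rw [rkSet_restrict M Set.subset_union_right] at h
  show rk ((con M C) ↾ X) + rkSet M C = rk (M ↾ (X ∪ C))
  rw [restrict_con_comm hC hX]
  exact h

lemma con_closure (hC : C ⊆ M.E) (hX : X ⊆ M.E \ C) :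
    (con M C).closure X = M.closure (X ∪ C) \ C := by
  obtain ⟨J, hJ⟩ := M.exists_isBasis C hC
  obtain ⟨I, hI⟩ := (con M C).exists_isBasis X (by rwa [con_ground])
  have hIX := hI.subset
  have hIcon := hI.indep
  have hIEC : I ⊆ M.E \ C := hIX.trans hX
  have hIJ : M.Indep (I ∪ J) := ((con_indep_iff hC hJ).1 hIcon).2
  have hIJE : I ∪ J ⊆ M.E := hIJ.subset_ground
  -- key pointwise equivalence for e ∈ M.E \ C with e ∉ I :
  have key : ∀ e ∈ M.E \ C, e ∉ I → (e ∈ (con M C).closure I ↔ e ∈ M.closure (I ∪ J)) := by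
    intro e he heI
    have heIJ : e ∉ I ∪ J := fun h => h.elim heI (fun h2 => he.2 (hJ.subset h2))
    rw [hIcon.mem_closure_iff_of_notMem heI, hIJ.mem_closure_iff_of_notMem heIJ,
      dep_iff, dep_iff, con_indep_iff hC hJ, con_ground]
    constructor
    · rintro ⟨hni, hsub⟩
      refine ⟨fun hind => hni ⟨hsub, by rwa [← Set.insert_union] at hind⟩,
        Set.insert_subset (he.1) hIJE⟩
    · rintro ⟨hni, -⟩
      exact ⟨fun ⟨_, hind⟩ => hni (by rwa [Set.insert_union] at hind),
        Set.insert_subset he hIEC⟩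
  have hbasis : M.IsBasis (I ∪ J) (X ∪ C) := by
    refine hIJ.isBasis_of_subset_of_subset_closure
      (Set.union_subset (hIX.trans Set.subset_union_left)
        (hJ.subset.trans Set.subset_union_right)) (Set.union_subset ?_ ?_)
    · intro x hx
      by_cases hxI : x ∈ I
      · exact M.subset_closure _ hIJE (Set.mem_union_left _ hxI)
      · refine (key x (hX hx) hxI).1 ?_
        exact hI.subset_closure hx
    · exact (hJ.subset_closure).trans (M.closure_subset_closure Set.subset_union_right)
  rw [← hI.closure_eq_closure, ← hbasis.closure_eq_closure]
  ext e
  constructor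
  · intro he
    have heg : e ∈ (con M C).E := (con M C).closure_subset_ground I he
    rw [con_ground] at heg
    by_cases heI : e ∈ I
    · exact ⟨M.subset_closure _ hIJE (Set.mem_union_left _ heI), heg.2⟩
    · exact ⟨(key e heg heI).1 he, heg.2⟩
  · rintro ⟨he, heC⟩
    have heE : e ∈ M.E := M.closure_subset_ground _ he
    by_cases heI : e ∈ I
    · exact (con M C).subset_closure I (by rwa [con_ground]) heI
    · exact (key e ⟨heE, heC⟩ heI).2 he

lemma con_flat_iff (hC : M.IsFlat C) :
    (con M C).IsFlat X ↔ ∃ H, M.IsFlat H ∧ C ⊆ H ∧ X = H \ C := by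
  constructor
  · intro hX
    have hXE : X ⊆ M.E \ C := by rw [← con_ground]; exact hX.subset_ground
    refine ⟨M.closure (X ∪ C), closure_flat' M _, ?_, ?_⟩
    · exact (Set.subset_union_right).trans (M.subset_closure _
        (Set.union_subset (hXE.trans Set.diff_subset) hC.subset_ground))
    · rw [← con_closure hC.subset_ground hXE, hX.closure]
  · rintro ⟨H, hH, hCH, rfl⟩
    refine flat_of_closure_eq ?_
    rw [con_closure hC.subset_ground (Set.diff_subset_diff_left hH.subset_ground),
      Set.diff_union_of_subset hCH, hH.closure]

lemma restrict_closure (hX : X ⊆ Y) (hY : Y ⊆ M.E) :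
    (M ↾ Y).closure X = M.closure X ∩ Y := by
  obtain ⟨I, hI⟩ := (M ↾ Y).exists_isBasis X (by rwa [restrict_ground_eq])
  have hI' : M.IsBasis I X := (isBasis_restrict_iff hY).1 hI |>.1
  have key : ∀ e ∈ Y, e ∉ I → (e ∈ (M ↾ Y).closure I ↔ e ∈ M.closure I) := by
    intro e heY heI
    rw [hI.indep.mem_closure_iff_of_notMem heI, hI'.indep.mem_closure_iff_of_notMem heI,
      dep_iff, dep_iff, restrict_indep_iff, restrict_ground_eq]
    have hsub : insert e I ⊆ Y := Set.insert_subset heY (hI.subset.trans hX)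
    constructor
    · rintro ⟨hni, -⟩
      exact ⟨fun h => hni ⟨h, hsub⟩, Set.insert_subset (hY heY) (hI'.indep.subset_ground)⟩
    · rintro ⟨hni, -⟩
      exact ⟨fun h => hni h.1, hsub⟩
  rw [← hI.closure_eq_closure, ← hI'.closure_eq_closure]
  ext e
  constructor
  · intro he
    have heY : e ∈ Y := by
      have := (M ↾ Y).closure_subset_ground I he
      rwa [restrict_ground_eq] at this
    by_cases heI : e ∈ I
    · exact ⟨M.subset_closure I hI'.indep.subset_ground heI, heY⟩
    · exact ⟨(key e heY heI).1 he, heY⟩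
  · rintro ⟨he, heY⟩
    by_cases heI : e ∈ I
    · exact (M ↾ Y).subset_closure I (by rw [restrict_ground_eq]; exact hI.subset.trans hX) heI
    · exact (key e heY heI).2 he

lemma restrict_flat_iff (hH : M.IsFlat H) :
    (M ↾ H).IsFlat F ↔ M.IsFlat F ∧ F ⊆ H := by
  constructor
  · intro hF
    have hFH : F ⊆ H := by
      have := hF.subset_ground; rwa [restrict_ground_eq] at this
    have h1 : M.closure F ∩ H = F := by
      rw [← restrict_closure hFH hH.subset_ground, hF.closure]
    have h2 : M.closure F ⊆ H := (M.closure_subset_closure hFH).trans hH.closure.subset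
    exact ⟨flat_of_closure_eq ((Set.inter_eq_left.2 h2).symm.trans h1), hFH⟩
  · rintro ⟨hF, hFH⟩
    refine flat_of_closure_eq ?_
    rw [restrict_closure hFH hH.subset_ground, hF.closure]
    exact Set.inter_eq_left.2 hFH

open Classical in
lemma flats_restrict (hH : M.IsFlat H) :
    flats (M ↾ H) = (flats M).filter (fun F => F ⊆ H) := by
  ext F
  simp [flats, restrict_flat_iff hH, and_comm]

open Classical in
lemma flats_con (hC : M.IsFlat C) :
    flats (con M C) = ((flats M).filter (fun H => C ⊆ H)).image (fun H => H \ C) := by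
  ext X
  simp only [flats, Finset.mem_image, Finset.mem_filter, Finset.mem_univ, true_and]
  rw [con_flat_iff hC]
  constructor
  · rintro ⟨H, h1, h2, h3⟩; exact ⟨H, ⟨h1, h2⟩, h3.symm⟩
  · rintro ⟨H, ⟨h1, h2⟩, h3⟩; exact ⟨H, h1, h2, h3.symm⟩

/-- Möbius functions agree across an order embedding whose image is interval-closed. -/
lemma mu_eq_of_embed {β γ : Type} [Preorder β] [Preorder γ]
    [DecidableEq β] [DecidableEq γ]
    [instβ : LocallyFiniteOrder β] [instγ : LocallyFiniteOrder γ]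
    (f : β → γ) (hinj : Function.Injective f) (hmono : ∀ a b : β, a ≤ b ↔ f a ≤ f b)
    (hsurj : ∀ a b : β, ∀ c : γ, a ≤ b → f a ≤ c → c ≤ f b → ∃ d, f d = c) :
    ∀ a b : β, IncidenceAlgebra.mu ℤ (f a) (f b) = IncidenceAlgebra.mu ℤ a b := by
  have main : ∀ n : ℕ, ∀ a b : β, (Finset.Icc a b).card ≤ n →
      IncidenceAlgebra.mu ℤ (f a) (f b) = IncidenceAlgebra.mu ℤ a b := by
    intro n
    induction n with
    | zero =>
      intro a b hcard
      have hnab : ¬ a ≤ b := by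
        intro hab
        have : a ∈ Finset.Icc a b := Finset.mem_Icc.2 ⟨le_refl a, hab⟩
        simp [Finset.card_eq_zero.1 (Nat.le_zero.1 hcard)] at this
      rw [IncidenceAlgebra.apply_eq_zero_of_not_le hnab,
        IncidenceAlgebra.apply_eq_zero_of_not_le (fun h => hnab ((hmono a b).2 h))]
    | succ n ih =>
      intro a b hcard
      by_cases hab : a ≤ b
      · by_cases heq : a = b
        · subst heq; simp
        · have hfne : f a ≠ f b := fun h => heq (hinj h)
          rw [IncidenceAlgebra.mu_eq_neg_sum_Ico_of_ne heq,
            IncidenceAlgebra.mu_eq_neg_sum_Ico_of_ne hfne]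
          have himg : Finset.Ico (f a) (f b) = (Finset.Ico a b).image f := by
            ext c
            simp only [Finset.mem_Ico, Finset.mem_image]
            constructor
            · rintro ⟨h1, h2⟩
              obtain ⟨d, rfl⟩ := hsurj a b c hab h1 h2.le
              exact ⟨d, ⟨(hmono a d).2 h1, lt_iff_le_not_ge.2 ⟨(hmono d b).2 h2.le,
                fun hbd => h2.not_ge ((hmono b d).1 hbd)⟩⟩, rfl⟩
            · rintro ⟨d, hd, rfl⟩
              exact ⟨(hmono a d).1 hd.1, lt_iff_le_not_ge.2 ⟨(hmono d b).1 hd.2.le,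
                fun h => hd.2.not_ge ((hmono b d).2 h)⟩⟩
          rw [himg, Finset.sum_image (fun x _ y _ h => hinj h)]
          congr 1
          refine Finset.sum_congr rfl fun x hx => ?_
          obtain ⟨h1, h2⟩ := Finset.mem_Ico.1 hx
          refine ih a x ?_
          have hss : Finset.Icc a x ⊂ Finset.Icc a b := by
            refine Finset.ssubset_iff_of_subset ?_ |>.2 ⟨b, Finset.mem_Icc.2 ⟨hab, le_refl b⟩,
              fun hmem => h2.not_ge (Finset.mem_Icc.1 hmem).2⟩
            intro y hy
            obtain ⟨hy1, hy2⟩ := Finset.mem_Icc.1 hy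
            exact Finset.mem_Icc.2 ⟨hy1, hy2.trans h2.le⟩
          exact Nat.lt_succ_iff.1 (lt_of_lt_of_le (Finset.card_lt_card hss) hcard)
      · rw [IncidenceAlgebra.apply_eq_zero_of_not_le hab,
          IncidenceAlgebra.apply_eq_zero_of_not_le (fun h => hab ((hmono a b).2 h))]
  exact fun a b => main (Finset.Icc a b).card a b le_rfl

open Classical in
lemma mob_def' {instL : LocallyFiniteOrder {X : Set α // M.IsFlat X}}
    (hF : M.IsFlat F) (hG : M.IsFlat G) :
    mob M F G = IncidenceAlgebra.mu ℤ (⟨F, hF⟩ : {X : Set α // M.IsFlat X}) ⟨G, hG⟩ := by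
  rw [mob, dif_pos hF, dif_pos hG]
  exact mu_eq_of_embed (β := {X : Set α // M.IsFlat X}) (γ := {X : Set α // M.IsFlat X})
    (instβ := instL) (instγ := Fintype.toLocallyFiniteOrder)
    id (fun _ _ h => h) (fun _ _ => Iff.rfl) (fun a b c _ h1 h2 => ⟨c, rfl⟩) ⟨F, hF⟩ ⟨G, hG⟩

open Classical in
lemma mob_restrict (hH : M.IsFlat H) (hF : M.IsFlat F) (hG : M.IsFlat G) (hFH : F ⊆ H)
    (hGH : G ⊆ H) : mob (M ↾ H) F G = mob M F G := by
  classical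
  letI : LocallyFiniteOrder {X : Set α // M.IsFlat X} := Fintype.toLocallyFiniteOrder
  letI : LocallyFiniteOrder {X : Set α // (M ↾ H).IsFlat X} := Fintype.toLocallyFiniteOrder
  have hF' : (M ↾ H).IsFlat F := (restrict_flat_iff hH).2 ⟨hF, hFH⟩
  have hG' : (M ↾ H).IsFlat G := (restrict_flat_iff hH).2 ⟨hG, hGH⟩
  rw [mob_def' hF' hG', mob_def' hF hG]
  exact mu_eq_of_embed
    (f := fun X : {X : Set α // (M ↾ H).IsFlat X} =>
      (⟨X.1, ((restrict_flat_iff hH).1 X.2).1⟩ : {X : Set α // M.IsFlat X}))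
    (fun a b h => Subtype.ext (by have := congrArg Subtype.val h; exact this))
    (fun a b => Iff.rfl)
    (fun a b c _ _ h2 => ⟨⟨c.1, (restrict_flat_iff hH).2
      ⟨c.2, (show (c : Set α) ⊆ b.1 from h2).trans ((restrict_flat_iff hH).1 b.2).2⟩⟩, rfl⟩)
    ⟨F, hF'⟩ ⟨G, hG'⟩ |>.symm

open Classical in
lemma mob_con (hC : M.IsFlat C) (hF : M.IsFlat F) (hG : M.IsFlat G) (hCF : C ⊆ F)
    (hCG : C ⊆ G) : mob (con M C) (F \ C) (G \ C) = mob M F G := by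
  classical
  letI : LocallyFiniteOrder {X : Set α // M.IsFlat X} := Fintype.toLocallyFiniteOrder
  letI : LocallyFiniteOrder {X : Set α // (con M C).IsFlat X} := Fintype.toLocallyFiniteOrder
  have hFc : (con M C).IsFlat (F \ C) := (con_flat_iff hC).2 ⟨F, hF, hCF, rfl⟩
  have hGc : (con M C).IsFlat (G \ C) := (con_flat_iff hC).2 ⟨G, hG, hCG, rfl⟩
  have hflat : ∀ X : {X : Set α // (con M C).IsFlat X}, M.IsFlat (X.1 ∪ C) := by
    rintro ⟨X, hX⟩
    obtain ⟨H', h1, h2, rfl⟩ := (con_flat_iff hC).1 hX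
    rwa [Set.diff_union_of_subset h2]
  have hdisj : ∀ X : {X : Set α // (con M C).IsFlat X}, Disjoint X.1 C := by
    rintro ⟨X, hX⟩
    obtain ⟨H', _, _, rfl⟩ := (con_flat_iff hC).1 hX
    exact Set.disjoint_sdiff_left
  have hcancel : ∀ X : {X : Set α // (con M C).IsFlat X}, (X.1 ∪ C) \ C = X.1 := by
    intro X
    rw [Set.union_diff_right, (hdisj X).sdiff_eq_left]
  rw [mob_def' hFc hGc, mob_def' hF hG]
  have key := mu_eq_of_embed
    (f := fun X : {X : Set α // (con M C).IsFlat X} =>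
      (⟨X.1 ∪ C, hflat X⟩ : {X : Set α // M.IsFlat X}))
    (fun a b h => Subtype.ext (by
      have h' : (a.1 ∪ C) \ C = (b.1 ∪ C) \ C := by
        rw [Subtype.ext_iff] at h
        exact congrArg (· \ C) h
      rwa [hcancel a, hcancel b] at h'))
    (fun a b => ⟨fun h => Set.union_subset_union_left C h, fun h => by
      have := Set.diff_subset_diff_left (t := C) h
      rwa [hcancel a, hcancel b] at this⟩)
    (fun a b c _ h1 h2 => by
      have hCc : C ⊆ c.1 := (Set.subset_union_right).trans h1
      refine ⟨⟨c.1 \ C, (con_flat_iff hC).2 ⟨c.1, c.2, hCc, rfl⟩⟩, ?_⟩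
      exact Subtype.ext (Set.diff_union_of_subset hCc))
    ⟨F \ C, hFc⟩ ⟨G \ C, hGc⟩
  have e1 : (⟨(F \ C) ∪ C, hflat ⟨F \ C, hFc⟩⟩ : {X : Set α // M.IsFlat X}) = ⟨F, hF⟩ :=
    Subtype.ext (Set.diff_union_of_subset hCF)
  have e2 : (⟨(G \ C) ∪ C, hflat ⟨G \ C, hGc⟩⟩ : {X : Set α // M.IsFlat X}) = ⟨G, hG⟩ :=
    Subtype.ext (Set.diff_union_of_subset hCG)
  rw [e1, e2] at key
  exact key.symm

open Classical in
lemma sum_mob_left (hG : M.IsFlat G) (hH : M.IsFlat H) :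
    ∑ F ∈ (flats M).filter (fun F => G ⊆ F ∧ F ⊆ H), mob M F H
      = if G = H then 1 else 0 := by
  classical
  letI : LocallyFiniteOrder {X : Set α // M.IsFlat X} := Fintype.toLocallyFiniteOrder
  have himg : (flats M).filter (fun F => G ⊆ F ∧ F ⊆ H)
      = (Finset.Icc (⟨G, hG⟩ : {X : Set α // M.IsFlat X}) ⟨H, hH⟩).image Subtype.val := by
    ext F
    simp only [Finset.mem_filter, Finset.mem_image, Finset.mem_Icc, flats,
      Finset.mem_univ, true_and]
    constructor
    · rintro ⟨h1, h2, h3⟩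
      exact ⟨⟨F, h1⟩, ⟨h2, h3⟩, rfl⟩
    · rintro ⟨x, ⟨h1, h2⟩, rfl⟩
      exact ⟨x.2, h1, h2⟩
  rw [himg, Finset.sum_image (fun x _ y _ h => Subtype.ext h),
    Finset.sum_congr rfl (fun x _ => mob_def' x.2 hH (instL := _)),
    IncidenceAlgebra.sum_Icc_mu_left]
  rcases eq_or_ne G H with h | h
  · subst h; simp
  · rw [if_neg (fun hc => h (congrArg Subtype.val hc)), if_neg h]

open Classical in
lemma sum_mob_right (hG : M.IsFlat G) (hH : M.IsFlat H) :
    ∑ F ∈ (flats M).filter (fun F => G ⊆ F ∧ F ⊆ H), mob M G F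
      = if G = H then 1 else 0 := by
  classical
  letI : LocallyFiniteOrder {X : Set α // M.IsFlat X} := Fintype.toLocallyFiniteOrder
  have himg : (flats M).filter (fun F => G ⊆ F ∧ F ⊆ H)
      = (Finset.Icc (⟨G, hG⟩ : {X : Set α // M.IsFlat X}) ⟨H, hH⟩).image Subtype.val := by
    ext F
    simp only [Finset.mem_filter, Finset.mem_image, Finset.mem_Icc, flats,
      Finset.mem_univ, true_and]
    constructor
    · rintro ⟨h1, h2, h3⟩
      exact ⟨⟨F, h1⟩, ⟨h2, h3⟩, rfl⟩
    · rintro ⟨x, ⟨h1, h2⟩, rfl⟩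
      exact ⟨x.2, h1, h2⟩
  rw [himg, Finset.sum_image (fun x _ y _ h => Subtype.ext h),
    Finset.sum_congr rfl (fun x _ => mob_def' hG x.2 (instL := _)),
    IncidenceAlgebra.sum_Icc_mu_right]
  rcases eq_or_ne G H with h | h
  · subst h; simp
  · rw [if_neg (fun hc => h (congrArg Subtype.val hc)), if_neg h]

open Classical in
lemma mem_flats : F ∈ flats M ↔ M.IsFlat F := by simp [flats]

lemma reflect_finset_sum {β : Type} (s : Finset β) (f : β → Polynomial ℤ) (N : ℕ) :
    (∑ x ∈ s, f x).reflect N = ∑ x ∈ s, (f x).reflect N := by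
  classical
  induction s using Finset.induction with
  | empty => simp [Polynomial.reflect_zero]
  | insert _ _ h ih => rw [Finset.sum_insert h, Finset.sum_insert h, Polynomial.reflect_add, ih]

open Classical in
lemma sum_mob_left' (hG : M.IsFlat G) (hH : M.IsFlat H) :
    ∑ F ∈ (flats M).filter (fun F => G ⊆ F ∧ F ⊆ H), mob M F H
      = if G = H then 1 else 0 := by
  classical
  by_cases hGH : G ⊆ H
  · exact sum_mob_left hG hH
  · rw [Finset.filter_false_of_mem fun F hF => ?_, Finset.sum_empty,
      if_neg (show ¬ G = H from fun h => hGH (h ▸ subset_rfl))]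
    rintro ⟨h1, h2⟩
    exact hGH (h1.trans h2)

open Classical in
lemma sum_mob_right' (hG : M.IsFlat G) (hH : M.IsFlat H) :
    ∑ F ∈ (flats M).filter (fun F => G ⊆ F ∧ F ⊆ H), mob M G F
      = if G = H then 1 else 0 := by
  classical
  by_cases hGH : G ⊆ H
  · exact sum_mob_right hG hH
  · rw [Finset.filter_false_of_mem fun F hF => ?_, Finset.sum_empty,
      if_neg (show ¬ G = H from fun h => hGH (h ▸ subset_rfl))]
    rintro ⟨h1, h2⟩
    exact hGH (h1.trans h2)

open Classical in
lemma chi_minor (hG : M.IsFlat G) (hH : M.IsFlat H) (hGH : G ⊆ H) :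
    chi (con (M ↾ H) G) = ∑ F ∈ (flats M).filter (fun F => G ⊆ F ∧ F ⊆ H),
      Polynomial.C (mob M G F) * Polynomial.X ^ (rkSet M H - rkSet M F) := by
  classical
  have hG' : (M ↾ H).IsFlat G := (restrict_flat_iff hH).2 ⟨hG, hGH⟩
  have hflats : flats (con (M ↾ H) G)
      = ((flats M).filter (fun F => G ⊆ F ∧ F ⊆ H)).image (fun F => F \ G) := by
    rw [flats_con hG', flats_restrict hH, Finset.filter_filter]
    congr 1
    apply Finset.filter_congr
    intro F _
    simp [and_comm]
  have hrkMi : rk (con (M ↾ H) G) + rkSet M G = rkSet M H := by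
    have h := rk_con_add (M := M ↾ H) (C := G) hG'.subset_ground
    rwa [rkSet_restrict M hGH] at h
  rw [chi, hflats, Finset.sum_image ?inj]
  case inj =>
    intro x hx y hy h
    rw [Finset.mem_coe, Finset.mem_filter] at hx hy
    simp only at h
    rw [← Set.diff_union_of_subset hx.2.1, ← Set.diff_union_of_subset hy.2.1, h]
  refine Finset.sum_congr rfl fun F hF => ?_
  rw [Finset.mem_filter] at hF
  obtain ⟨hFmem, hGF, hFH⟩ := hF
  have hFflat : M.IsFlat F := mem_flats.1 hFmem
  have hF' : (M ↾ H).IsFlat F := (restrict_flat_iff hH).2 ⟨hFflat, hFH⟩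
  have hmob : mob (con (M ↾ H) G) ∅ (F \ G) = mob M G F := by
    rw [show (∅ : Set α) = G \ G from (Set.diff_self).symm,
      mob_con hG' hG' hF' subset_rfl hGF, mob_restrict hH hG hFflat hGH hFH]
  have hrkF : rkSet (con (M ↾ H) G) (F \ G) + rkSet M G = rkSet M F := by
    have h := rkSet_con (M := M ↾ H) (C := G) hG'.subset_ground (X := F \ G)
      (by rw [restrict_ground_eq]; exact Set.diff_subset_diff_left hFH)
    rwa [Set.diff_union_of_subset hGF, rkSet_restrict M hGH, rkSet_restrict M hFH] at h
  rw [hmob]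
  have h1 : rkSet M G ≤ rkSet M F := rkSet_mono M hGF
  have e : rk (con (M ↾ H) G) - rkSet (con (M ↾ H) G) (F \ G) = rkSet M H - rkSet M F := by
    omega
  rw [e]

open Classical in
lemma reflect_chi_minor (hG : M.IsFlat G) (hH : M.IsFlat H) (hGH : G ⊆ H) :
    (chi (con (M ↾ H) G)).reflect (rkSet M H - rkSet M G)
      = ∑ F ∈ (flats M).filter (fun F => G ⊆ F ∧ F ⊆ H),
        Polynomial.C (mob M G F) * Polynomial.X ^ (rkSet M F - rkSet M G) := by
  classical
  rw [chi_minor hG hH hGH, reflect_finset_sum]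
  refine Finset.sum_congr rfl fun F hF => ?_
  rw [Finset.mem_filter] at hF
  obtain ⟨hFmem, hGF, hFH⟩ := hF
  have hFflat : M.IsFlat F := mem_flats.1 hFmem
  have h1 : rkSet M G ≤ rkSet M F := rkSet_mono M hGF
  have h2 : rkSet M F ≤ rkSet M H := rkSet_mono M hFH
  rw [Polynomial.reflect_C_mul_X_pow, Polynomial.revAt_le (by omega)]
  have e : rkSet M H - rkSet M G - (rkSet M H - rkSet M F) = rkSet M F - rkSet M G := by omega
  rw [e]

lemma natDegree_chi_le : (chi M).natDegree ≤ rk M := by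
  refine Polynomial.natDegree_sum_le_of_forall_le _ _ fun F _ => ?_
  exact (Polynomial.natDegree_C_mul_X_pow_le _ _).trans (Nat.sub_le _ _)

open Classical in
lemma kernel_interval (hG : M.IsFlat G) (hH : M.IsFlat H) (hGH : G ⊆ H) :
    ∑ F ∈ (flats M).filter (fun F => G ⊆ F ∧ F ⊆ H),
      ((chi (con (M ↾ F) G)).reflect (rkSet M F - rkSet M G)) * chi (con (M ↾ H) F)
      = if G = H then 1 else 0 := by
  classical
  set s := flats M with hs
  have main2 : ∑ F ∈ s.filter (fun F => G ⊆ F ∧ F ⊆ H),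
      ((chi (con (M ↾ F) G)).reflect (rkSet M F - rkSet M G)) * chi (con (M ↾ H) F)
      = ∑ F ∈ s, ∑ A ∈ s, ∑ B ∈ s,
        (if (G ⊆ A ∧ A ⊆ F) ∧ (F ⊆ B ∧ B ⊆ H) then
          (Polynomial.C (mob M G A) * Polynomial.X ^ (rkSet M A - rkSet M G)) *
          (Polynomial.C (mob M F B) * Polynomial.X ^ (rkSet M H - rkSet M B)) else 0) := by
    rw [Finset.sum_filter]
    refine Finset.sum_congr rfl fun F hF => ?_
    have hFflat : M.IsFlat F := mem_flats.1 hF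
    by_cases hcond : G ⊆ F ∧ F ⊆ H
    · rw [if_pos hcond, reflect_chi_minor hG hFflat hcond.1, chi_minor hFflat hH hcond.2,
        Finset.sum_mul_sum, Finset.sum_filter]
      refine Finset.sum_congr rfl fun A _ => ?_
      by_cases hcA : G ⊆ A ∧ A ⊆ F
      · rw [if_pos hcA, Finset.sum_filter]
        exact Finset.sum_congr rfl fun B _ => (if_congr (and_iff_right hcA).symm rfl rfl)
      · rw [if_neg hcA]
        symm
        exact Finset.sum_eq_zero fun B _ => if_neg (fun h => hcA h.1)
    · rw [if_neg hcond]
      symm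
      refine Finset.sum_eq_zero fun A _ => Finset.sum_eq_zero fun B _ => ?_
      rw [if_neg]
      rintro ⟨⟨h1, h2⟩, h3, h4⟩
      exact hcond ⟨h1.trans h2, h3.trans h4⟩
  have main3 : ∑ F ∈ s, ∑ A ∈ s, ∑ B ∈ s,
        (if (G ⊆ A ∧ A ⊆ F) ∧ (F ⊆ B ∧ B ⊆ H) then
          (Polynomial.C (mob M G A) * Polynomial.X ^ (rkSet M A - rkSet M G)) *
          (Polynomial.C (mob M F B) * Polynomial.X ^ (rkSet M H - rkSet M B)) else 0)
      = ∑ A ∈ s, ∑ B ∈ s, ∑ F ∈ s,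
        (if (G ⊆ A ∧ A ⊆ F) ∧ (F ⊆ B ∧ B ⊆ H) then
          (Polynomial.C (mob M G A) * Polynomial.X ^ (rkSet M A - rkSet M G)) *
          (Polynomial.C (mob M F B) * Polynomial.X ^ (rkSet M H - rkSet M B)) else 0) := by
    rw [Finset.sum_comm]
    exact Finset.sum_congr rfl fun A _ => Finset.sum_comm
  rw [main2, main3]
  have inner : ∀ A ∈ s, ∀ B ∈ s, (∑ F ∈ s,
        (if (G ⊆ A ∧ A ⊆ F) ∧ (F ⊆ B ∧ B ⊆ H) then
          (Polynomial.C (mob M G A) * Polynomial.X ^ (rkSet M A - rkSet M G)) *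
          (Polynomial.C (mob M F B) * Polynomial.X ^ (rkSet M H - rkSet M B)) else 0))
      = if B = A ∧ G ⊆ A ∧ A ⊆ H then
          (Polynomial.C (mob M G A) * Polynomial.X ^ (rkSet M A - rkSet M G)) *
          Polynomial.X ^ (rkSet M H - rkSet M A) else 0 := by
    intro A hA B hB
    have hAflat : M.IsFlat A := mem_flats.1 hA
    have hBflat : M.IsFlat B := mem_flats.1 hB
    by_cases hGA : G ⊆ A
    · by_cases hBH : B ⊆ H
      · have hcollect : ∀ F ∈ s,
            (if (G ⊆ A ∧ A ⊆ F) ∧ (F ⊆ B ∧ B ⊆ H) then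
              (Polynomial.C (mob M G A) * Polynomial.X ^ (rkSet M A - rkSet M G)) *
              (Polynomial.C (mob M F B) * Polynomial.X ^ (rkSet M H - rkSet M B)) else 0)
            = (if A ⊆ F ∧ F ⊆ B then
              ((Polynomial.C (mob M G A) * Polynomial.X ^ (rkSet M A - rkSet M G)) *
               Polynomial.X ^ (rkSet M H - rkSet M B)) * Polynomial.C (mob M F B) else 0) := by
          intro F _
          refine (if_congr ⟨fun h => ⟨h.1.2, h.2.1⟩, fun h => ⟨⟨hGA, h.1⟩, h.2, hBH⟩⟩
            (by ring) rfl)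
        rw [Finset.sum_congr rfl hcollect, ← Finset.sum_filter, ← Finset.mul_sum,
          ← map_sum, sum_mob_left' hAflat hBflat]
        by_cases hAB : A = B
        · subst hAB
          rw [if_pos rfl, if_pos ⟨rfl, hGA, hBH⟩, Polynomial.C_1, mul_one]
        · rw [if_neg hAB, if_neg (fun h => hAB h.1.symm), Polynomial.C_0, mul_zero]
      · rw [if_neg (show ¬(B = A ∧ G ⊆ A ∧ A ⊆ H) from fun h => hBH (h.1 ▸ h.2.2))]
        refine Finset.sum_eq_zero fun F _ => if_neg (fun h => hBH h.2.2)
    · rw [if_neg (fun h => hGA h.2.1)]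
      refine Finset.sum_eq_zero fun F _ => if_neg (fun h => hGA h.1.1)
  rw [Finset.sum_congr rfl fun A hA => Finset.sum_congr rfl fun B hB => inner A hA B hB]
  have collapseB : ∀ A ∈ s, (∑ B ∈ s, if B = A ∧ G ⊆ A ∧ A ⊆ H then
        (Polynomial.C (mob M G A) * Polynomial.X ^ (rkSet M A - rkSet M G)) *
        Polynomial.X ^ (rkSet M H - rkSet M A) else 0)
      = if G ⊆ A ∧ A ⊆ H then
          Polynomial.C (mob M G A) * Polynomial.X ^ (rkSet M H - rkSet M G) else 0 := by
    intro A hA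
    have hAflat : M.IsFlat A := mem_flats.1 hA
    have hsum : ∀ B ∈ s, (if B = A ∧ G ⊆ A ∧ A ⊆ H then
        (Polynomial.C (mob M G A) * Polynomial.X ^ (rkSet M A - rkSet M G)) *
        Polynomial.X ^ (rkSet M H - rkSet M A) else 0)
        = if B = A then (if G ⊆ A ∧ A ⊆ H then
            Polynomial.C (mob M G A) * Polynomial.X ^ (rkSet M H - rkSet M G) else 0)
          else 0 := by
      intro B _
      by_cases hBA : B = A
      · subst hBA
        by_cases hc : G ⊆ B ∧ B ⊆ H
        · rw [if_pos ⟨rfl, hc⟩, if_pos rfl, if_pos hc, mul_assoc, ← pow_add]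
          have h1 : rkSet M G ≤ rkSet M B := rkSet_mono M hc.1
          have h2 : rkSet M B ≤ rkSet M H := rkSet_mono M hc.2
          congr 2
          omega
        · rw [if_neg (fun h => hc h.2), if_pos rfl, if_neg hc]
      · rw [if_neg (fun h => hBA h.1), if_neg hBA]
    rw [Finset.sum_congr rfl hsum, Finset.sum_ite_eq' s A, if_pos hA]
  rw [Finset.sum_congr rfl collapseB, ← Finset.sum_filter, ← Finset.sum_mul,
    ← map_sum, sum_mob_right' hG hH]
  rcases eq_or_ne G H with h | h
  · subst h
    rw [if_pos rfl, if_pos rfl, Polynomial.C_1, Nat.sub_self, pow_zero, one_mul]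
  · rw [if_neg h, if_neg h, Polynomial.C_0, zero_mul]

open Classical in
lemma kernel_interval' (hG : M.IsFlat G) (hH : M.IsFlat H) :
    ∑ F ∈ (flats M).filter (fun F => G ⊆ F ∧ F ⊆ H),
      ((chi (con (M ↾ F) G)).reflect (rkSet M F - rkSet M G)) * chi (con (M ↾ H) F)
      = if G = H then 1 else 0 := by
  classical
  by_cases hGH : G ⊆ H
  · exact kernel_interval hG hH hGH
  · rw [Finset.filter_false_of_mem fun F hF => ?_, Finset.sum_empty,
      if_neg (show ¬ G = H from fun h => hGH (h ▸ subset_rfl))]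
    rintro ⟨h1, h2⟩
    exact hGH (h1.trans h2)

open Classical in
lemma inverse_identity (P Q : Matroid α → Polynomial ℤ) (hP : IsKLPolynomial P)
    (hQ : IsInvKLPolynomial Q) (N : Matroid α) (hN : Loopless N) (h0 : 0 < rk N) :
    ∑ F ∈ flats N, (-1 : Polynomial ℤ) ^ (rkSet N F) * Q (N ↾ F) * P (con N F) = 0 := by
  classical
  obtain ⟨hQ0, hQdeg, hQrec⟩ := hQ
  obtain ⟨hP0, hPdeg, hPrec⟩ := hP
  have degP : ∀ N' : Matroid α, Loopless N' → 2 * (P N').natDegree ≤ rk N' := by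
    intro N' h
    rcases Nat.eq_zero_or_pos (rk N') with h1 | h1
    · rw [hP0 N' h h1, Polynomial.natDegree_one]; omega
    · exact (hPdeg N' h h1).le
  have degQ : ∀ N' : Matroid α, Loopless N' → 2 * (Q N').natDegree ≤ rk N' := by
    intro N' h
    rcases Nat.eq_zero_or_pos (rk N') with h1 | h1
    · rw [hQ0 N' h h1, Polynomial.natDegree_one]; omega
    · exact (hQdeg N' h h1).le
  have hflat : ∀ F ∈ flats N, N.IsFlat F := fun F hF => mem_flats.1 hF
  have hrk_le : ∀ F ∈ flats N, rkSet N F ≤ rk N :=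
    fun F hF => rkSet_le_rk N (hflat F hF).subset_ground
  have hLres : ∀ F ∈ flats N, Loopless (N ↾ F) :=
    fun F hF => loopless_restrict hN (hflat F hF).subset_ground
  have hLcon : ∀ F ∈ flats N, Loopless (con N F) := fun F hF => loopless_con hN (hflat F hF)
  have hrkcon : ∀ F ∈ flats N, rk (con N F) = rk N - rkSet N F := fun F hF => by
    have := rk_con_add (M := N) (hflat F hF).subset_ground
    omega
  have hC : ∀ m : ℕ, ((-1 : Polynomial ℤ)) ^ m = Polynomial.C ((-1 : ℤ) ^ m) := fun m => by
    rw [map_pow, map_neg, map_one]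
  -- transported Q-recursion
  have qrec : ∀ F ∈ flats N,
      (-1 : Polynomial ℤ) ^ (rkSet N F) * Polynomial.reflect (rkSet N F) (Q (N ↾ F))
      = ∑ G ∈ flats N, (if G ⊆ F then (-1 : Polynomial ℤ) ^ (rkSet N G) * Q (N ↾ G) *
          Polynomial.reflect (rkSet N F - rkSet N G) (chi (con (N ↾ F) G)) else 0) := by
    intro F hF
    have h := hQrec (N ↾ F) (hLres F hF)
    have erk : rk (N ↾ F) = rkSet N F := rfl
    rw [erk, flats_restrict (hflat F hF), Finset.sum_filter] at h
    rw [h]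
    refine Finset.sum_congr rfl fun G hG => ?_
    by_cases hGF : G ⊆ F
    · rw [if_pos hGF, if_pos hGF, restrict_restrict_eq N hGF, rkSet_restrict N hGF]
    · rw [if_neg hGF, if_neg hGF]
  -- transported P-recursion
  have prec : ∀ F ∈ flats N,
      Polynomial.reflect (rk N - rkSet N F) (P (con N F))
      = ∑ H ∈ flats N, (if F ⊆ H then chi (con (N ↾ H) F) * P (con N H) else 0) := by
    intro F hF
    have h := hPrec (con N F) (hLcon F hF)
    rw [hrkcon F hF, flats_con (hflat F hF), Finset.sum_image ?inj] at h
    case inj =>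
      intro x hx y hy hxy
      rw [Finset.mem_coe, Finset.mem_filter] at hx hy
      simp only at hxy
      rw [← Set.diff_union_of_subset hx.2, ← Set.diff_union_of_subset hy.2, hxy]
    rw [Finset.sum_filter] at h
    rw [h]
    refine Finset.sum_congr rfl fun H hH => ?_
    by_cases hFH : F ⊆ H
    · rw [if_pos hFH, if_pos hFH,
        restrict_con_comm (hflat F hF).subset_ground
          (Set.diff_subset_diff_left (hflat H hH).subset_ground),
        Set.diff_union_of_subset hFH,
        con_con N F (H \ F) (hflat F hF).subset_ground
          (Set.diff_subset_diff_left (hflat H hH).subset_ground),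
        Set.union_diff_cancel hFH]
    · rw [if_neg hFH, if_neg hFH]
  -- Step 1 : palindromicity
  have step1 : Polynomial.reflect (rk N)
      (∑ F ∈ flats N, (-1 : Polynomial ℤ) ^ (rkSet N F) * Q (N ↾ F) * P (con N F))
      = ∑ F ∈ flats N, (-1 : Polynomial ℤ) ^ (rkSet N F) * Q (N ↾ F) * P (con N F) := by
    rw [reflect_finset_sum]
    have perF : ∀ F ∈ flats N,
        Polynomial.reflect (rk N) ((-1 : Polynomial ℤ) ^ (rkSet N F) * Q (N ↾ F) * P (con N F))
        = (∑ G ∈ flats N, (if G ⊆ F then (-1 : Polynomial ℤ) ^ (rkSet N G) * Q (N ↾ G) *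
            Polynomial.reflect (rkSet N F - rkSet N G) (chi (con (N ↾ F) G)) else 0)) *
          (∑ H ∈ flats N, (if F ⊆ H then chi (con (N ↾ H) F) * P (con N H) else 0)) := by
      intro F hF
      have h1 : (-1 : Polynomial ℤ) ^ (rkSet N F) * Q (N ↾ F) * P (con N F)
          = Polynomial.C ((-1 : ℤ) ^ (rkSet N F)) * (Q (N ↾ F) * P (con N F)) := by
        rw [← hC, mul_assoc]
      have hρ : rkSet N F + (rk N - rkSet N F) = rk N := by
        have := hrk_le F hF; omega
      have dq : (Q (N ↾ F)).natDegree ≤ rkSet N F := by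
        have := degQ (N ↾ F) (hLres F hF)
        have erk : rk (N ↾ F) = rkSet N F := rfl
        omega
      have dp : (P (con N F)).natDegree ≤ rk N - rkSet N F := by
        have := degP (con N F) (hLcon F hF)
        have := hrkcon F hF
        omega
      rw [h1, Polynomial.reflect_C_mul, ← hρ, Polynomial.reflect_mul _ _ dq dp,
        ← mul_assoc, ← hC, qrec F hF, prec F hF]
    rw [Finset.sum_congr rfl perF]
    -- expand products into triple sum
    have expand : ∀ F ∈ flats N,
        (∑ G ∈ flats N, (if G ⊆ F then (-1 : Polynomial ℤ) ^ (rkSet N G) * Q (N ↾ G) *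
            Polynomial.reflect (rkSet N F - rkSet N G) (chi (con (N ↾ F) G)) else 0)) *
          (∑ H ∈ flats N, (if F ⊆ H then chi (con (N ↾ H) F) * P (con N H) else 0))
        = ∑ G ∈ flats N, ∑ H ∈ flats N,
            (if G ⊆ F ∧ F ⊆ H then
              ((-1 : Polynomial ℤ) ^ (rkSet N G) * Q (N ↾ G) *
                Polynomial.reflect (rkSet N F - rkSet N G) (chi (con (N ↾ F) G))) *
              (chi (con (N ↾ H) F) * P (con N H)) else 0) := by
      intro F _
      rw [Finset.sum_mul_sum]
      refine Finset.sum_congr rfl fun G _ => Finset.sum_congr rfl fun H _ => ?_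
      by_cases h1 : G ⊆ F <;> by_cases h2 : F ⊆ H <;> simp [h1, h2]
    rw [Finset.sum_congr rfl expand]
    -- swap sums: F outside to inside
    rw [Finset.sum_comm]
    rw [Finset.sum_congr rfl fun G (_ : G ∈ flats N) => Finset.sum_comm]
    -- collapse inner sum over F using the kernel identity
    have collapse : ∀ G ∈ flats N, ∀ H ∈ flats N,
        (∑ F ∈ flats N, (if G ⊆ F ∧ F ⊆ H then
          ((-1 : Polynomial ℤ) ^ (rkSet N G) * Q (N ↾ G) *
            Polynomial.reflect (rkSet N F - rkSet N G) (chi (con (N ↾ F) G))) *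
          (chi (con (N ↾ H) F) * P (con N H)) else 0))
        = if H = G then (-1 : Polynomial ℤ) ^ (rkSet N G) * Q (N ↾ G) * P (con N H) else 0 := by
      intro G hG H hH
      have rearrange : ∀ F ∈ flats N, (if G ⊆ F ∧ F ⊆ H then
          ((-1 : Polynomial ℤ) ^ (rkSet N G) * Q (N ↾ G) *
            Polynomial.reflect (rkSet N F - rkSet N G) (chi (con (N ↾ F) G))) *
          (chi (con (N ↾ H) F) * P (con N H)) else 0)
          = (if G ⊆ F ∧ F ⊆ H then
            ((-1 : Polynomial ℤ) ^ (rkSet N G) * Q (N ↾ G) * P (con N H)) *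
            (Polynomial.reflect (rkSet N F - rkSet N G) (chi (con (N ↾ F) G)) *
              chi (con (N ↾ H) F)) else 0) := by
        intro F _
        exact if_congr Iff.rfl (by ring) rfl
      rw [Finset.sum_congr rfl rearrange, ← Finset.sum_filter, ← Finset.mul_sum,
        kernel_interval' (hflat G hG) (hflat H hH)]
      by_cases hGH : G = H
      · subst hGH
        rw [if_pos rfl, if_pos rfl, mul_one]
      · rw [if_neg hGH, if_neg (fun h => hGH h.symm), mul_zero]
    rw [Finset.sum_congr rfl fun G hG => Finset.sum_congr rfl fun H hH => collapse G hG H hH]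
    refine Finset.sum_congr rfl fun G hG => ?_
    rw [Finset.sum_ite_eq' (flats N) G
      (fun H => (-1 : Polynomial ℤ) ^ (rkSet N G) * Q (N ↾ G) * P (con N H)), if_pos hG]
  -- Step 2 : degree bound
  have step2 : 2 * (∑ F ∈ flats N,
      (-1 : Polynomial ℤ) ^ (rkSet N F) * Q (N ↾ F) * P (con N F)).natDegree < rk N := by
    have bound : ∀ F ∈ flats N,
        ((-1 : Polynomial ℤ) ^ (rkSet N F) * Q (N ↾ F) * P (con N F)).natDegree
          ≤ (rk N - 1) / 2 := by
      intro F hF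
      have dq2 : 2 * (Q (N ↾ F)).natDegree ≤ rkSet N F := degQ (N ↾ F) (hLres F hF)
      have dp2 : 2 * (P (con N F)).natDegree ≤ rk N - rkSet N F := by
        have := degP (con N F) (hLcon F hF)
        have := hrkcon F hF
        omega
      have hstrict : 2 * ((Q (N ↾ F)).natDegree + (P (con N F)).natDegree) < rk N := by
        rcases Nat.eq_zero_or_pos (rkSet N F) with h1 | h1
        · have : Q (N ↾ F) = 1 := hQ0 (N ↾ F) (hLres F hF) h1
          rw [this, Polynomial.natDegree_one]
          have hc : 0 < rk (con N F) := by
            have := hrkcon F hF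
            have := hrk_le F hF
            omega
          have := hPdeg (con N F) (hLcon F hF) hc
          have := hrkcon F hF
          omega
        · rcases Nat.lt_or_ge (rkSet N F) (rk N) with h2 | h2
          · have hq := hQdeg (N ↾ F) (hLres F hF) (by exact h1)
            have erk : rk (N ↾ F) = rkSet N F := rfl
            rw [erk] at hq
            have hc : 0 < rk (con N F) := by
              have := hrkcon F hF
              omega
            have hp := hPdeg (con N F) (hLcon F hF) hc
            have := hrkcon F hF
            omega
          · have hFE : rkSet N F = rk N := le_antisymm (hrk_le F hF) h2
            have hc : rk (con N F) = 0 := by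
              have := hrkcon F hF
              omega
            have : P (con N F) = 1 := hP0 (con N F) (hLcon F hF) hc
            rw [this, Polynomial.natDegree_one]
            have hq := hQdeg (N ↾ F) (hLres F hF) (by
              have erk : rk (N ↾ F) = rkSet N F := rfl
              omega)
            have erk : rk (N ↾ F) = rkSet N F := rfl
            omega
      have dmul : ((-1 : Polynomial ℤ) ^ (rkSet N F) * Q (N ↾ F) * P (con N F)).natDegree
          ≤ (Q (N ↾ F)).natDegree + (P (con N F)).natDegree := by
        refine (Polynomial.natDegree_mul_le).trans ?_
        have h1 : ((-1 : Polynomial ℤ) ^ (rkSet N F) * Q (N ↾ F)).natDegree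
            ≤ (Q (N ↾ F)).natDegree := by
          rw [hC]
          exact Polynomial.natDegree_C_mul_le _ _
        omega
      omega
    have hb : (∑ F ∈ flats N,
        (-1 : Polynomial ℤ) ^ (rkSet N F) * Q (N ↾ F) * P (con N F)).natDegree
        ≤ (rk N - 1) / 2 :=
      Polynomial.natDegree_sum_le_of_forall_le (flats N) _ bound
    omega
  -- Step 3 : conclude
  by_contra hne
  set A := ∑ F ∈ flats N, (-1 : Polynomial ℤ) ^ (rkSet N F) * Q (N ↾ F) * P (con N F) with hA
  have hd : A.coeff A.natDegree ≠ 0 := by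
    rw [← Polynomial.leadingCoeff]
    exact Polynomial.leadingCoeff_ne_zero.2 hne
  have hcoeff : ∀ i, A.coeff i = A.coeff (Polynomial.revAt (rk N) i) := by
    intro i
    conv_lhs => rw [← step1]
    rw [Polynomial.coeff_reflect]
  have key : A.coeff (rk N - A.natDegree) = A.coeff A.natDegree := by
    rw [hcoeff (rk N - A.natDegree), Polynomial.revAt_le (Nat.sub_le _ _)]
    congr 1
    omega
  have hle : rk N - A.natDegree ≤ A.natDegree :=
    Polynomial.le_natDegree_of_ne_zero (key ▸ hd)
  omega

end Aux

/-- Let `M` be a loopless matroid of odd rank `r = 2k+1` on a finite ground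
set. Then the coefficient of `t^k` in the Kazhdan–Lusztig polynomial `P_M(t)` equals the
coefficient of `t^k` in the inverse Kazhdan–Lusztig polynomial `Q_M(t)`. -/
theorem coeff_top_eq_of_odd_rank {α : Type} [Fintype α]
    (P Q : Matroid α → Polynomial ℤ) (hP : IsKLPolynomial P) (hQ : IsInvKLPolynomial Q)
    (M : Matroid α) (hM : Loopless M) (k : ℕ) (hrk : rk M = 2 * k + 1) :
    (P M).coeff k = (Q M).coeff k := by
  classical
  have hid := inverse_identity P Q hP hQ M hM (by omega)
  have hEne : M.E ≠ ∅ := fun h => by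
    rw [rk_eq_zero_of_ground_empty h] at hrk; omega
  have hbot : (∅ : Set α) ∈ flats M := mem_flats.2 (loopless_empty_flat hM)
  have htop : M.E ∈ flats M := mem_flats.2 M.ground_isFlat
  have hsum : ∑ F ∈ flats M,
      ((-1 : Polynomial ℤ) ^ (rkSet M F) * Q (M ↾ F) * P (con M F)).coeff k = 0 := by
    rw [← Polynomial.finset_sum_coeff, hid, Polynomial.coeff_zero]
  have hbotval : ((-1 : Polynomial ℤ) ^ (rkSet M ∅) * Q (M ↾ ∅) * P (con M ∅)).coeff k
      = (P M).coeff k := by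
    have hq1 : Q (M ↾ ∅) = 1 :=
      hQ.1 (M ↾ ∅) (loopless_restrict hM (Set.empty_subset _)) (rkSet_empty M)
    rw [rkSet_empty, pow_zero, one_mul, hq1, con_empty, one_mul]
  have htopval : ((-1 : Polynomial ℤ) ^ (rkSet M M.E) * Q (M ↾ M.E) * P (con M M.E)).coeff k
      = -((Q M).coeff k) := by
    have hLcE : Loopless (con M M.E) := by
      intro e he
      rw [con_ground, Set.diff_self] at he
      exact absurd he (Set.notMem_empty e)
    have hp1 : P (con M M.E) = 1 :=
      hP.1 _ hLcE (rk_eq_zero_of_ground_empty (by rw [con_ground, Set.diff_self]))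
    rw [rkSet_ground, hrk, restrict_ground_eq_self, hp1, mul_one,
      Odd.neg_one_pow ⟨k, by ring⟩, neg_one_mul, Polynomial.coeff_neg]
  have hE' : M.E ∈ (flats M).erase ∅ := Finset.mem_erase.2 ⟨hEne, htop⟩
  rw [← Finset.add_sum_erase _ _ hbot, ← Finset.add_sum_erase _ _ hE'] at hsum
  have hzero : ∑ F ∈ ((flats M).erase ∅).erase M.E,
      ((-1 : Polynomial ℤ) ^ (rkSet M F) * Q (M ↾ F) * P (con M F)).coeff k = 0 := by
    refine Finset.sum_eq_zero fun F hF => ?_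
    have hFE : F ≠ M.E := (Finset.mem_erase.1 hF).1
    have hFbot : F ≠ ∅ := (Finset.mem_erase.1 (Finset.mem_erase.1 hF).2).1
    have hFmem : F ∈ flats M := (Finset.mem_erase.1 (Finset.mem_erase.1 hF).2).2
    have hFflat : M.IsFlat F := mem_flats.1 hFmem
    have h1 : 0 < rkSet M F := loopless_flat_rk_pos hM hFflat hFbot
    have h2 : rkSet M F < rk M := rkSet_lt_rk_of_flat_ne hFflat hFE
    have hdq : 2 * (Q (M ↾ F)).natDegree < rkSet M F :=
      hQ.2.1 (M ↾ F) (loopless_restrict hM hFflat.subset_ground) h1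
    have hrkc : rk (con M F) = rk M - rkSet M F := by
      have := rk_con_add (M := M) hFflat.subset_ground
      omega
    have hdp : 2 * (P (con M F)).natDegree < rk M - rkSet M F := by
      have := hP.2.1 (con M F) (loopless_con hM hFflat) (by omega)
      omega
    refine Polynomial.coeff_eq_zero_of_natDegree_lt ?_
    have dmul : ((-1 : Polynomial ℤ) ^ (rkSet M F) * Q (M ↾ F) * P (con M F)).natDegree
        ≤ (Q (M ↾ F)).natDegree + (P (con M F)).natDegree := by
      refine (Polynomial.natDegree_mul_le).trans ?_
      have hc : ((-1 : Polynomial ℤ)) ^ (rkSet M F)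
          = Polynomial.C ((-1 : ℤ) ^ (rkSet M F)) := by
        rw [map_pow, map_neg, map_one]
      have h3 : ((-1 : Polynomial ℤ) ^ (rkSet M F) * Q (M ↾ F)).natDegree
          ≤ (Q (M ↾ F)).natDegree := by
        rw [hc]
        exact Polynomial.natDegree_C_mul_le _ _
      omega
    omega
  rw [hbotval, htopval, hzero] at hsum
  omega

end KL
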